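/- arXiv:0903.4486 — 2 statements merged into one kernel-verified Lean document; each statement's English description precedes it below -/
import Mathlib

section
/- Let (Ω, F, (F_t)_{t ≥ 0}, P) be a filtered probability space, let (W_t) be a standard Brownian motion that is a martingale with respect to (F_t), and let (h_t) be a bounded, (F_t)-progressively measurable real-valued process. Define the observation process Y_t = ∫₀ᵗ h_s ds + W_t and let F^Y_t = σ(Y_s : 0 ≤ s ≤ t) be its natural filtration. Let π_s(h) denote a measurable version of the conditional expectation E[h_s | F^Y_s]. Then the innovation process I_t = Y_t − ∫₀ᵗ π_s(h) ds is a martingale with respect to the filtration (F^Y_t). -/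
open MeasureTheory ProbabilityTheory



lemma joint_min {Ω : Type*} {mΩ : MeasurableSpace Ω} {t : ℝ} {u : ℝ → Ω → ℝ}
    (hu : StronglyMeasurable[Subtype.instMeasurableSpace.prod mΩ]
      fun p : Set.Iic t × Ω => u p.1 p.2) :
    StronglyMeasurable fun p : ℝ × Ω => u (min p.1 t) p.2 :=
  hu.comp_measurable
    (show Measurable fun p : ℝ × Ω =>
        ((⟨min p.1 t, Set.mem_Iic.2 (min_le_right _ _)⟩ : Set.Iic t), p.2) from
      ((measurable_fst.min measurable_const).subtype_mk).prodMk measurable_snd)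

lemma sm_intervalIntegral {Ω : Type*} {mΩ : MeasurableSpace Ω} {u : ℝ × Ω → ℝ}
    (hu : StronglyMeasurable u) (a b : ℝ) :
    StronglyMeasurable fun ω => ∫ s in a..b, u (s, ω) := by
  have h1 : StronglyMeasurable fun ω => ∫ s in Set.Ioc a b, u (s, ω) :=
    StronglyMeasurable.integral_prod_left' (μ := volume.restrict (Set.Ioc a b)) hu
  have h2 : StronglyMeasurable fun ω => ∫ s in Set.Ioc b a, u (s, ω) :=
    StronglyMeasurable.integral_prod_left' (μ := volume.restrict (Set.Ioc b a)) hu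
  exact h1.sub h2

lemma prog_intervalIntegral_sm {Ω : Type*} {m : MeasurableSpace Ω} (G : Filtration ℝ m)
    {u : ℝ → Ω → ℝ} (hu : ProgMeasurable G u) {t : ℝ} (ht : 0 ≤ t) :
    StronglyMeasurable[G t] fun ω => ∫ s in (0:ℝ)..t, u s ω := by
  have h1 := joint_min (mΩ := G t) (hu t)
  have h2 := sm_intervalIntegral (mΩ := G t) h1 0 t
  have : (fun ω => ∫ s in (0:ℝ)..t, u s ω)
      = fun ω => ∫ s in (0:ℝ)..t, u (min s t) ω := by
    funext ω
    refine intervalIntegral.integral_congr fun s hs => ?_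
    rw [Set.uIcc_of_le ht] at hs
    rw [min_eq_left hs.2]
  rw [this]
  exact h2

lemma prod_mono_right {α β : Type*} {m1 : MeasurableSpace α} {m2 m2' : MeasurableSpace β}
    (hm : m2 ≤ m2') : m1.prod m2 ≤ m1.prod m2' :=
  sup_le_sup le_rfl (MeasurableSpace.comap_mono hm)

lemma prog_joint_sm' {Ω : Type*} {m : MeasurableSpace Ω} (G : Filtration ℝ m)
    {u : ℝ → Ω → ℝ} (hu : ProgMeasurable G u) (t : ℝ) :
    StronglyMeasurable fun p : ℝ × Ω => u (min p.1 t) p.2 :=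
  (joint_min (mΩ := G t) (hu t)).mono (prod_mono_right (G.le t))


/-- Let `(Ω, F, (F_t), P)` be a filtered probability space, `(W_t)` a standard
Brownian motion that is an `(F_t)`-martingale, and `(h_t)` a bounded `(F_t)`-progressively
measurable real process.  Define the observation process `Y_t = ∫₀ᵗ h_s ds + W_t`, let
`F^Y_t = σ(Y_s : 0 ≤ s ≤ t)` be its natural filtration, and let `π_s(h)` be a (progressively)
measurable version of `E[h_s | F^Y_s]`.  Then the innovation process
`I_t = Y_t − ∫₀ᵗ π_s(h) ds` is a martingale with respect to `(F^Y_t)`: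
it is integrable, `F^Y_t`-adapted, and `E[I_t | F^Y_s] = I_s` a.s. for `0 ≤ s ≤ t`. -/
theorem innovation_process_is_martingale
    {Ω : Type*} {m : MeasurableSpace Ω} (P : Measure Ω) [IsProbabilityMeasure P]
    (F : Filtration ℝ m)
    -- `W` is a standard Brownian motion …
    (W : ℝ → Ω → ℝ)
    (hWmeas : ∀ t, Measurable (W t))
    (hW0 : ∀ ω, W 0 ω = 0)
    (hWcont : ∀ ω, Continuous fun t => W t ω)
    (hWgauss : ∀ s t, 0 ≤ s → s ≤ t →
      P.map (fun ω => W t ω - W s ω) = gaussianReal 0 (t - s).toNNReal)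
    (hWindep : ∀ s t, 0 ≤ s → s ≤ t →
      Indep (F s) (MeasurableSpace.comap (fun ω => W t ω - W s ω) (borel ℝ)) P)
    -- … that is an `(F_t)`-martingale
    (hWadapted : Adapted F W)
    (hWint : ∀ t, 0 ≤ t → Integrable (W t) P)
    (hWmart : ∀ s t, 0 ≤ s → s ≤ t → P[W t | F s] =ᵐ[P] W s)
    -- `h` is bounded and `(F_t)`-progressively measurable
    (h : ℝ → Ω → ℝ)
    (hhbdd : ∃ C, ∀ t ω, |h t ω| ≤ C)
    (hhprog : ProgMeasurable F h)
    -- the observation process `Y_t = ∫₀ᵗ h_s ds + W_t`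
    (Y : ℝ → Ω → ℝ)
    (hY : ∀ t ω, Y t ω = (∫ s in (0 : ℝ)..t, h s ω) + W t ω)
    -- its natural filtration `F^Y_t = σ(Y_s : 0 ≤ s ≤ t)`
    (FY : Filtration ℝ m)
    (hFY : ∀ t, 0 ≤ t →
      (FY t : MeasurableSpace Ω)
        = ⨆ s ∈ Set.Icc (0 : ℝ) t, MeasurableSpace.comap (Y s) (borel ℝ))
    -- `π_s(h)`: a progressively measurable version of `E[h_s | F^Y_s]`
    (π : ℝ → Ω → ℝ)
    (hπprog : ProgMeasurable FY π)
    (hπ : ∀ s, 0 ≤ s → π s =ᵐ[P] P[h s | FY s])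
    -- the innovation process `I_t = Y_t − ∫₀ᵗ π_s(h) ds`
    (I : ℝ → Ω → ℝ)
    (hI : ∀ t ω, I t ω = Y t ω - ∫ s in (0 : ℝ)..t, π s ω) :
    -- `I` is a martingale with respect to `(F^Y_t)`
    (∀ t, 0 ≤ t → Integrable (I t) P) ∧
    (∀ t, 0 ≤ t → StronglyMeasurable[FY t] (I t)) ∧
    (∀ s t, 0 ≤ s → s ≤ t → P[I t | FY s] =ᵐ[P] I s) := by
  classical
  obtain ⟨C, hC⟩ := hhbdd
  have hΩ : Nonempty Ω := by
    by_contra h0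
    have h1 : P Set.univ = 0 := by
      rw [Set.univ_eq_empty_iff.2 (not_nonempty_iff.1 h0)]
      simp
    rw [measure_univ] at h1
    exact one_ne_zero h1
  obtain ⟨ω₀⟩ := hΩ
  have hC0 : 0 ≤ C := le_trans (abs_nonneg _) (hC 0 ω₀)
  -- finiteness of restricted volume measures
  have hfin : ∀ a b : ℝ, IsFiniteMeasure (volume.restrict (Set.Ioc a b)) := by
    intro a b
    constructor
    rw [Measure.restrict_apply_univ]
    simp [Real.volume_Ioc]
  -- integrability of h at each time
  have hhint : ∀ u : ℝ, Integrable (h u) P := by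
    intro u
    refine Integrable.mono' (integrable_const C)
      (((ProgMeasurable.stronglyAdapted hhprog u).mono (F.le u)).aestronglyMeasurable) ?_
    exact ae_of_all _ fun ω => by rw [Real.norm_eq_abs]; exact hC u ω
  -- integrability of π at each nonnegative time
  have hπint : ∀ u : ℝ, 0 ≤ u → Integrable (π u) P := fun u hu =>
    integrable_condExp.congr (hπ u hu).symm
  -- a.e. bound on π at each nonnegative time
  have hπbdd : ∀ u : ℝ, 0 ≤ u → ∀ᵐ ω ∂P, |π u ω| ≤ C := by
    intro u hu
    have h1 : ∀ᵐ ω ∂P, |(P[h u | FY u]) ω| ≤ ((⟨C, hC0⟩ : NNReal) : ℝ) :=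
      ae_bdd_condExp_of_ae_bdd (ae_of_all _ fun ω => by
        exact hC u ω)
    filter_upwards [h1, hπ u hu] with ω h1 h2
    rw [h2]
    simpa using h1
  -- joint measurability of truncated π and h
  have hqsm : ∀ t : ℝ, StronglyMeasurable fun p : ℝ × Ω => π (min p.1 t) p.2 :=
    fun t => prog_joint_sm' FY hπprog t
  have hgsm : ∀ t : ℝ, StronglyMeasurable fun p : ℝ × Ω => h (min p.1 t) p.2 :=
    fun t => prog_joint_sm' F hhprog t
  -- a.e. (ω) a.e. (u) bound for π on time intervals
  have H1 : ∀ a t : ℝ, 0 ≤ a → a ≤ t →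
      ∀ᵐ ω ∂P, ∀ᵐ u ∂(volume.restrict (Set.Ioc a t)), |π u ω| ≤ C := by
    intro a t ha hat
    set ν := volume.restrict (Set.Ioc a t) with hν
    set B : Set (ℝ × Ω) := {p : ℝ × Ω | C < |π (min p.1 t) p.2|} with hBdef
    have hB : MeasurableSet B :=
      measurableSet_lt measurable_const ((hqsm t).measurable.abs)
    have hB0 : (ν.prod P) B = 0 := by
      rw [Measure.measure_prod_null hB]
      filter_upwards [ae_restrict_mem measurableSet_Ioc] with u hu
      have hu0 : 0 ≤ u := ha.trans hu.1.le
      have := hπbdd u hu0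
      rw [ae_iff] at this
      rw [Pi.zero_apply]
      convert this using 2
      ext ω
      simp [hBdef, min_eq_left hu.2, not_le]
    have hswap : (P.prod ν) (Prod.swap ⁻¹' B) = 0 := by
      rw [← Measure.prod_swap] at hB0
      rwa [Measure.map_apply measurable_swap hB] at hB0
    rw [Measure.measure_prod_null (hB.preimage measurable_swap)] at hswap
    filter_upwards [hswap] with ω hω
    have h2 : ∀ᵐ u ∂ν, u ∉ (Prod.mk ω ⁻¹' (Prod.swap ⁻¹' B)) :=
      measure_eq_zero_iff_ae_notMem.1 hω
    filter_upwards [h2, ae_restrict_mem measurableSet_Ioc] with u h3 h4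
    simp only [hBdef, Set.mem_preimage, Set.mem_setOf_eq, Prod.swap] at h3
    rw [min_eq_left h4.2] at h3
    exact not_lt.1 h3
  -- strong measurability of Y
  have hYsmF : ∀ t : ℝ, 0 ≤ t → StronglyMeasurable[F t] (Y t) := by
    intro t ht
    have hrw : Y t = fun ω => (∫ u in (0:ℝ)..t, h u ω) + W t ω := funext fun ω => hY t ω
    rw [hrw]
    exact (prog_intervalIntegral_sm F hhprog ht).add (hWadapted t).stronglyMeasurable
  have hFYleF : ∀ t : ℝ, 0 ≤ t → FY t ≤ F t := by
    intro t ht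
    rw [hFY t ht]
    refine iSup₂_le fun r hr => ?_
    have hmeas : Measurable[F t] (Y r) :=
      ((hYsmF r hr.1).mono (F.mono hr.2)).measurable
    rw [← BorelSpace.measurable_eq (α := ℝ)]
    exact measurable_iff_comap_le.1 hmeas
  have hYsm : ∀ t : ℝ, 0 ≤ t → StronglyMeasurable[FY t] (Y t) := by
    intro t ht
    have hle : MeasurableSpace.comap (Y t) (borel ℝ) ≤ FY t := by
      rw [hFY t ht]
      exact le_biSup (fun r => MeasurableSpace.comap (Y r) (borel ℝ)) (Set.mem_Icc.2 ⟨ht, le_rfl⟩)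
    have hmeas : Measurable[FY t] (Y t) := by
      rw [measurable_iff_comap_le, BorelSpace.measurable_eq (α := ℝ)]
      exact hle
    exact hmeas.stronglyMeasurable
  -- part 2 : adaptedness
  have hIsm : ∀ t : ℝ, 0 ≤ t → StronglyMeasurable[FY t] (I t) := by
    intro t ht
    have hrw : I t = fun ω => Y t ω - ∫ u in (0:ℝ)..t, π u ω := funext fun ω => hI t ω
    rw [hrw]
    exact (hYsm t ht).sub (prog_intervalIntegral_sm FY hπprog ht)
  -- part 1 : integrability
  have hYint : ∀ t : ℝ, 0 ≤ t → Integrable (Y t) P := by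
    intro t ht
    have hrw : Y t = fun ω => (∫ u in (0:ℝ)..t, h u ω) + W t ω := funext fun ω => hY t ω
    rw [hrw]
    refine Integrable.add ?_ (hWint t ht)
    refine Integrable.mono' (integrable_const (C * |t - 0|))
      (((prog_intervalIntegral_sm F hhprog ht).mono (F.le t)).aestronglyMeasurable) ?_
    refine ae_of_all _ fun ω => ?_
    exact intervalIntegral.norm_integral_le_of_norm_le_const fun x _ => by
      rw [Real.norm_eq_abs]; exact hC x ω
  have hπIint : ∀ t : ℝ, 0 ≤ t → Integrable (fun ω => ∫ u in (0:ℝ)..t, π u ω) P := by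
    intro t ht
    haveI := hfin (0:ℝ) t
    refine Integrable.mono'
      (integrable_const ((volume (Set.Ioc (0:ℝ) t)).toReal * C))
      (((prog_intervalIntegral_sm FY hπprog ht).mono (FY.le t)).aestronglyMeasurable) ?_
    filter_upwards [H1 0 t le_rfl ht] with ω hω
    have hmin : ∀ᵐ u ∂(volume.restrict (Set.Ioc (0:ℝ) t)), π (min u t) ω = π u ω := by
      filter_upwards [ae_restrict_mem measurableSet_Ioc] with u hu
      rw [min_eq_left hu.2]
    have hmeas : AEStronglyMeasurable (fun u => π u ω)
        (volume.restrict (Set.Ioc (0:ℝ) t)) :=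
      (((hqsm t).measurable.comp (measurable_id.prodMk measurable_const)
        ).aestronglyMeasurable).congr hmin
    rw [Real.norm_eq_abs, intervalIntegral.integral_of_le ht]
    have hb : ∀ᵐ u ∂(volume.restrict (Set.Ioc (0:ℝ) t)), ‖π u ω‖ ≤ C := by
      filter_upwards [hω] with u hu
      rwa [Real.norm_eq_abs]
    calc |∫ u in Set.Ioc (0:ℝ) t, π u ω| ≤ ∫ _ in Set.Ioc (0:ℝ) t, C := by
          rw [← Real.norm_eq_abs]
          exact norm_integral_le_of_norm_le (integrable_const C) hb
      _ = (volume (Set.Ioc (0:ℝ) t)).toReal * C := by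
          rw [setIntegral_const, smul_eq_mul, measureReal_def]
  have hIint : ∀ t : ℝ, 0 ≤ t → Integrable (I t) P := by
    intro t ht
    have hrw : I t = fun ω => Y t ω - ∫ u in (0:ℝ)..t, π u ω := funext fun ω => hI t ω
    rw [hrw]
    exact (hYint t ht).sub (hπIint t ht)
  refine ⟨hIint, hIsm, ?_⟩
  -- part 3 : martingale property
  intro s t hs hst
  have ht : 0 ≤ t := hs.trans hst
  haveI : SigmaFinite (P.trim (FY.le s)) := by
    haveI := isFiniteMeasure_trim (μ := P) (FY.le s)
    infer_instance
  set ν := volume.restrict (Set.Ioc s t) with hν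
  haveI := hfin s t
  set Φ : Ω → ℝ := fun ω => ∫ u in s..t, (h (min u t) ω - π (min u t) ω) with hΦ
  have hΦsm : StronglyMeasurable Φ :=
    sm_intervalIntegral (mΩ := m) ((hgsm t).sub (hqsm t)) s t
  have htrunc : ∀ (v : ℝ → Ω → ℝ) (a b : ℝ) (ω : Ω), a ≤ t → b ≤ t →
      (∫ u in a..b, v u ω) = ∫ u in a..b, v (min u t) ω := by
    intro v a b ω hat hbt
    refine intervalIntegral.integral_congr fun u hu => ?_
    have hu' : u ≤ t := le_trans (Set.mem_Icc.1 hu).2 (max_le hat hbt)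
    rw [min_eq_left hu']
  have hIIh : ∀ (a b : ℝ) (ω : Ω),
      IntervalIntegrable (fun u => h (min u t) ω) volume a b := by
    intro a b ω
    have hme : Measurable fun u => h (min u t) ω :=
      (hgsm t).measurable.comp (measurable_id.prodMk measurable_const)
    constructor <;>
    · haveI := hfin a b
      haveI := hfin b a
      refine Integrable.mono' (integrable_const C) hme.aestronglyMeasurable.restrict ?_
      exact ae_of_all _ fun u => by rw [Real.norm_eq_abs]; exact hC _ _
  have hIIπ : ∀ᵐ ω ∂P, ∀ a b : ℝ, 0 ≤ a → a ≤ t → 0 ≤ b → b ≤ t →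
      IntervalIntegrable (fun u => π (min u t) ω) volume a b := by
    filter_upwards [H1 0 t le_rfl ht] with ω hω
    intro a b ha hat hb hbt
    have hme : Measurable fun u => π (min u t) ω :=
      (hqsm t).measurable.comp (measurable_id.prodMk measurable_const)
    have key : ∀ c d : ℝ, 0 ≤ c → d ≤ t →
        IntegrableOn (fun u => π (min u t) ω) (Set.Ioc c d) volume := by
      intro c d hc hdt
      haveI := hfin c d
      refine Integrable.mono' (integrable_const C) hme.aestronglyMeasurable.restrict ?_
      have hsub : Set.Ioc c d ⊆ Set.Ioc 0 t := Set.Ioc_subset_Ioc hc hdt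
      have h1 := ae_restrict_of_ae_restrict_of_subset hsub hω
      filter_upwards [h1, ae_restrict_mem measurableSet_Ioc] with u h2 h3
      rw [Real.norm_eq_abs, min_eq_left (h3.2.trans hdt)]
      exact h2
    exact ⟨key a b ha hbt, key b a hb hat⟩
  have hdecomp : ∀ᵐ ω ∂P, I t ω - I s ω = (W t ω - W s ω) + Φ ω := by
    filter_upwards [hIIπ] with ω hω
    have h0s : IntervalIntegrable (fun u => π (min u t) ω) volume 0 s :=
      hω 0 s le_rfl ht hs hst
    have hstπ : IntervalIntegrable (fun u => π (min u t) ω) volume s t :=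
      hω s t hs hst ht le_rfl
    have hADDπ := intervalIntegral.integral_add_adjacent_intervals h0s hstπ
    have hADDh := intervalIntegral.integral_add_adjacent_intervals (hIIh 0 s ω) (hIIh s t ω)
    have e1 : I t ω - I s ω =
        ((∫ u in (0:ℝ)..t, h u ω) - ∫ u in (0:ℝ)..s, h u ω) + (W t ω - W s ω)
          - ((∫ u in (0:ℝ)..t, π u ω) - ∫ u in (0:ℝ)..s, π u ω) := by
      rw [hI, hI, hY, hY]; ring
    have e4 : Φ ω = (∫ u in s..t, h (min u t) ω) - ∫ u in s..t, π (min u t) ω :=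
      intervalIntegral.integral_sub (hIIh s t ω) hstπ
    rw [e1, htrunc h 0 t ω ht le_rfl, htrunc h 0 s ω ht hst,
      htrunc π 0 t ω ht le_rfl, htrunc π 0 s ω ht hst]
    linarith [hADDπ, hADDh, e4]
  have hg_eq : ∀ A : Set Ω, MeasurableSet[FY s] A → P A < ⊤ →
      ∫ x in A, I s x ∂P = ∫ x in A, I t x ∂P := by
    intro A hA _
    have hAm : MeasurableSet A := (FY.le s) A hA
    have hWzero : ∫ ω in A, (W t ω - W s ω) ∂P = 0 := by
      have hAF : MeasurableSet[F s] A := (hFYleF s hs) A hA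
      have h1 : ∫ ω in A, W t ω ∂P = ∫ ω in A, W s ω ∂P := by
        rw [← setIntegral_condExp (F.le s) (hWint t ht) hAF]
        exact setIntegral_congr_ae hAm ((hWmart s t hs hst).mono fun ω hω _ => hω)
      rw [integral_sub ((hWint t ht).integrableOn) ((hWint s hs).integrableOn), h1,
        sub_self]
    have hΦbdd : ∀ᵐ ω ∂P, ‖Φ ω‖ ≤ (volume (Set.Ioc s t)).toReal * (C + C) := by
      filter_upwards [H1 s t hs hst] with ω hω
      have hb : ∀ᵐ u ∂ν, ‖h (min u t) ω - π (min u t) ω‖ ≤ C + C := by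
        filter_upwards [hω, ae_restrict_mem measurableSet_Ioc] with u h1 h2
        rw [min_eq_left h2.2]
        refine (norm_sub_le _ _).trans (add_le_add ?_ ?_) <;> rw [Real.norm_eq_abs]
        · exact hC _ _
        · exact h1
      have : Φ ω = ∫ u, (h (min u t) ω - π (min u t) ω) ∂ν :=
        intervalIntegral.integral_of_le hst
      rw [this]
      refine (norm_integral_le_of_norm_le (integrable_const (C + C)) hb).trans ?_
      rw [integral_const, smul_eq_mul, measureReal_def, Measure.restrict_apply_univ]
    have hΦint : Integrable Φ P :=
      Integrable.mono' (integrable_const _) hΦsm.aestronglyMeasurable hΦbdd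
    have hΦzero : ∫ ω in A, Φ ω ∂P = 0 := by
      set μA := P.restrict A with hμA
      have hf : Integrable
          (Function.uncurry fun ω u => h (min u t) ω - π (min u t) ω) (μA.prod ν) := by
        have hsm2 : StronglyMeasurable
            (Function.uncurry fun (ω : Ω) (u : ℝ) => h (min u t) ω - π (min u t) ω) :=
          ((hgsm t).sub (hqsm t)).comp_measurable measurable_swap
        refine Integrable.mono' (integrable_const (C + C)) hsm2.aestronglyMeasurable ?_
        set B2 : Set (Ω × ℝ) := {p : Ω × ℝ | C < |π (min p.2 t) p.1|} with hB2
        have hB2m : MeasurableSet B2 :=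
          measurableSet_lt measurable_const
            (((hqsm t).measurable.comp measurable_swap).abs)
        have hB2null : (μA.prod ν) B2 = 0 := by
          rw [Measure.measure_prod_null hB2m]
          refine ae_restrict_of_ae ?_
          filter_upwards [H1 s t hs hst] with ω hω
          refine measure_eq_zero_iff_ae_notMem.2 ?_
          filter_upwards [hω, ae_restrict_mem measurableSet_Ioc] with u h1 h2
          simp only [hB2, Set.mem_preimage, Set.mem_setOf_eq]
          rw [min_eq_left h2.2]
          exact not_lt.2 h1
        have hae : ∀ᵐ p ∂(μA.prod ν), p ∉ B2 := measure_eq_zero_iff_ae_notMem.1 hB2null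
        filter_upwards [hae] with p hp
        have h2 : |π (min p.2 t) p.1| ≤ C := not_lt.1 (by simpa [hB2] using hp)
        simp only [Function.uncurry]
        rw [Real.norm_eq_abs]
        refine (abs_sub _ _).trans (add_le_add (hC _ _) h2)
      have hswap := integral_integral_swap hf
      have hΦrw : ∫ ω in A, Φ ω ∂P
          = ∫ ω, (∫ u, (h (min u t) ω - π (min u t) ω) ∂ν) ∂μA :=
        integral_congr_ae (ae_of_all _ fun ω => intervalIntegral.integral_of_le hst)
      rw [hΦrw, hswap]
      have hinner : ∀ᵐ u ∂ν,
          (∫ ω, (h (min u t) ω - π (min u t) ω) ∂μA) = 0 := by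
        filter_upwards [ae_restrict_mem measurableSet_Ioc] with u hu
        have hu0 : 0 ≤ u := hs.trans hu.1.le
        have hAu : MeasurableSet[FY u] A := (FY.mono hu.1.le) A hA
        have h1 : ∫ ω in A, π u ω ∂P = ∫ ω in A, h u ω ∂P := by
          have h2 : ∫ ω in A, π u ω ∂P = ∫ ω in A, (P[h u|FY u]) ω ∂P :=
            setIntegral_congr_ae hAm ((hπ u hu0).mono fun ω hω _ => hω)
          rw [h2, setIntegral_condExp (FY.le u) (hhint u) hAu]
        have h3 : (∫ ω, (h (min u t) ω - π (min u t) ω) ∂μA)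
            = ∫ ω in A, (h u ω - π u ω) ∂P := by
          rw [hμA]
          refine integral_congr_ae (ae_of_all _ fun ω => ?_)
          rw [min_eq_left hu.2]
        rw [h3, integral_sub ((hhint u).integrableOn) ((hπint u hu0).integrableOn),
          h1, sub_self]
      exact integral_eq_zero_of_ae (hinner.mono fun u hu => hu)
    have hsub : ∫ ω in A, (I t ω - I s ω) ∂P = 0 := by
      have h5 : ∫ ω in A, (I t ω - I s ω) ∂P = ∫ ω in A, ((W t ω - W s ω) + Φ ω) ∂P :=
        setIntegral_congr_ae hAm (hdecomp.mono fun ω hω _ => hω)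
      have hWdiff : Integrable (fun ω => W t ω - W s ω) P :=
        Integrable.sub (hWint t ht) (hWint s hs)
      rw [h5, integral_add hWdiff.integrableOn hΦint.integrableOn, hWzero, hΦzero,
        add_zero]
    have h6 := integral_sub ((hIint t ht).integrableOn (s := A))
      ((hIint s hs).integrableOn (s := A))
    rw [h6] at hsub
    linarith
  exact (ae_eq_condExp_of_forall_setIntegral_eq (FY.le s) (hIint t ht)
    (fun A _ _ => (hIint s hs).integrableOn) hg_eq
    ((hIsm s hs).aestronglyMeasurable)).symm
end

section
/- Let (X_t)_{t ≥ 0} be a real-valued semimartingale of the form X_t = X_0 + ∫₀ᵗ H_s ds + Z_t, where (Z_t) is an (F_t)-martingale with Z_0 = 0, (H_t) is a bounded (F_t)-progressively measurable process, E[sup_{s ≤ t} |X_s|] < ∞ for every t ≥ 0, and X_0 is square-integrable. Let F^Y_t = σ(Y_s : s ≤ t) for an observation process Y and let π_s(X) denote a measurable version of E[X_s | F^Y_s], and π_s(H) a measurable version of E[H_s | F^Y_s]. Then the process N_t = π_t(X) − π_0(X) − ∫₀ᵗ π_s(H) ds is a martingale with respect to the filtration (F^Y_t). -/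
open MeasureTheory ProbabilityTheory

section Aux

variable {Ω : Type*}

lemma filt_prod_mono {α : Type*} {m1 : MeasurableSpace α} {m m' : MeasurableSpace Ω}
    (h : m ≤ m') : m1.prod m ≤ m1.prod m' :=
  sup_le_sup le_rfl (MeasurableSpace.comap_mono h)

lemma filt_clamp_sm [mΩ : MeasurableSpace Ω] {G : ℝ → Ω → ℝ} {t : ℝ}
    (hG : StronglyMeasurable fun p : Set.Iic t × Ω => G p.1 p.2) :
    StronglyMeasurable fun p : ℝ × Ω => G (min p.1 t) p.2 := by
  have he : (fun p : ℝ × Ω => G (min p.1 t) p.2)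
      = (fun p : Set.Iic t × Ω => G p.1 p.2) ∘
        (fun p : ℝ × Ω => (⟨min p.1 t, Set.mem_Iic.mpr (min_le_right _ _)⟩, p.2)) := rfl
  rw [he]
  exact hG.comp_measurable
    (((measurable_fst.min measurable_const).subtype_mk).prodMk measurable_snd)

lemma filt_ae_snd_mem [mΩ : MeasurableSpace Ω] (μ : Measure Ω) [SFinite μ] {S : Set ℝ}
    (hS : MeasurableSet S) :
    ∀ᵐ p ∂(μ.prod (volume.restrict S)), p.2 ∈ S := by
  rw [ae_iff]
  have he : {p : Ω × ℝ | ¬ p.2 ∈ S} = (Set.univ : Set Ω) ×ˢ Sᶜ := by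
    ext p; simp [Set.mem_prod]
  rw [he, Measure.prod_prod, Measure.restrict_apply hS.compl]
  simp

lemma filt_ae_prod_bound [mΩ : MeasurableSpace Ω] {P : Measure Ω} [IsFiniteMeasure P]
    {G Gc : ℝ → Ω → ℝ} {C a b : ℝ}
    (hGc : StronglyMeasurable fun p : ℝ × Ω => Gc p.1 p.2)
    (heq : ∀ u ω, u ∈ Set.Ioc a b → Gc u ω = G u ω)
    (hb : ∀ u ∈ Set.Ioc a b, ∀ᵐ ω ∂P, |G u ω| ≤ C) :
    ∀ᵐ p ∂(P.prod (volume.restrict (Set.Ioc a b))), |G p.2 p.1| ≤ C := by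
  set Q := volume.restrict (Set.Ioc a b) with hQ
  have hmeasT : MeasurableSet {p : Ω × ℝ | C < |Gc p.2 p.1|} := by
    have hmeas : Measurable fun p : Ω × ℝ => Gc p.2 p.1 := hGc.measurable.comp measurable_swap
    exact measurableSet_lt measurable_const hmeas.abs
  have hnull : (P.prod Q) {p : Ω × ℝ | C < |Gc p.2 p.1|} = 0 := by
    rw [Measure.prod_apply_symm hmeasT]
    have hz : ∀ᵐ u ∂Q, P ((fun ω => (ω, u)) ⁻¹' {p : Ω × ℝ | C < |Gc p.2 p.1|}) = 0 := by
      filter_upwards [ae_restrict_mem measurableSet_Ioc] with u hu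
      have hset : ((fun ω => (ω, u)) ⁻¹' {p : Ω × ℝ | C < |Gc p.2 p.1|})
          = {ω | ¬ (|G u ω| ≤ C)} := by
        ext ω; simp [heq u ω hu, not_le]
      rw [hset]
      exact ae_iff.mp (hb u hu)
    rw [lintegral_congr_ae hz, lintegral_zero]
  have h2 : ∀ᵐ p ∂(P.prod Q), p.2 ∈ Set.Ioc a b := filt_ae_snd_mem P measurableSet_Ioc
  have h3 : ∀ᵐ p ∂(P.prod Q), ¬ (C < |Gc p.2 p.1|) := by
    rw [ae_iff]
    simpa using hnull
  filter_upwards [h2, h3] with p hp2 hp3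
  rw [← heq p.2 p.1 hp2]
  exact not_lt.mp hp3

lemma filt_condexp_eq_of_setIntegral_eq {m : MeasurableSpace Ω} {m0 : MeasurableSpace Ω}
    {P : @Measure Ω m0} [IsFiniteMeasure P] (hm : m ≤ m0) {f g : Ω → ℝ}
    (hf : Integrable f P) (hg : Integrable g P)
    (h : ∀ A, MeasurableSet[m] A → ∫ ω in A, f ω ∂P = ∫ ω in A, g ω ∂P) :
    P[f|m] =ᵐ[P] P[g|m] := by
  haveI : IsFiniteMeasure (P.trim hm) := isFiniteMeasure_trim hm
  refine ae_eq_condExp_of_forall_setIntegral_eq (g := P[f|m]) hm hg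
    (fun A hA _ => integrable_condExp.integrableOn) (fun A hA _ => ?_)
    (stronglyMeasurable_condExp.aestronglyMeasurable)
  rw [setIntegral_condExp hm hf hA]
  exact h A hA

end Aux

/-- Let `(X_t)_{t ≥ 0}` be a real semimartingale of the form
`X_t = X_0 + ∫₀ᵗ H_s ds + Z_t`, with `(Z_t)` an `(F_t)`-martingale with `Z_0 = 0`, `(H_t)` a
bounded `(F_t)`-progressively measurable process, `E[sup_{s ≤ t} |X_s|] < ∞` for every
`t ≥ 0`, and `X_0` square-integrable.  Let `F^Y_t = σ(Y_s : s ≤ t)` for an observation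
process `Y`, and let `π_s(X)`, `π_s(H)` be measurable versions of `E[X_s | F^Y_s]` and
`E[H_s | F^Y_s]`.  Then `N_t = π_t(X) − π_0(X) − ∫₀ᵗ π_s(H) ds` is a martingale with respect
to `(F^Y_t)`: it is integrable, `F^Y_t`-adapted, and `E[N_t | F^Y_s] = N_s` a.s. for
`0 ≤ s ≤ t`. -/
theorem filtered_semimartingale_is_martingale
    {Ω : Type*} {m0 : MeasurableSpace Ω} (P : Measure Ω) [IsProbabilityMeasure P]
    (F : Filtration ℝ m0)
    -- `H` is bounded and `(F_t)`-progressively measurable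
    (H : ℝ → Ω → ℝ)
    (hHbdd : ∃ C, ∀ t ω, |H t ω| ≤ C)
    (hHprog : ProgMeasurable F H)
    -- `Z` is an `(F_t)`-martingale with `Z_0 = 0`
    (Z : ℝ → Ω → ℝ)
    (hZadapted : Adapted F Z)
    (hZint : ∀ t, 0 ≤ t → Integrable (Z t) P)
    (hZmart : ∀ s t, 0 ≤ s → s ≤ t → P[Z t | F s] =ᵐ[P] Z s)
    (hZ0 : ∀ ω, Z 0 ω = 0)
    -- the semimartingale `X_t = X_0 + ∫₀ᵗ H_s ds + Z_t`
    (X : ℝ → Ω → ℝ)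
    (hXmeas : ∀ t, Measurable (X t))
    (hXdecomp : ∀ t ω, X t ω = X 0 ω + (∫ s in (0 : ℝ)..t, H s ω) + Z t ω)
    -- `E[sup_{s ≤ t} |X_s|] < ∞` for every `t ≥ 0`
    (hXsup : ∀ t, 0 ≤ t → Integrable (fun ω => ⨆ s : Set.Icc (0 : ℝ) t, |X s ω|) P)
    -- `X_0` is square-integrable
    (hX0L2 : MemLp (X 0) 2 P)
    -- the observation process `Y`, adapted to `(F_t)`
    (Y : ℝ → Ω → ℝ)
    (hYmeas : ∀ t, Measurable (Y t))
    (hYadapted : Adapted F Y)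
    -- its natural filtration `F^Y_t = σ(Y_s : 0 ≤ s ≤ t)`
    (FY : Filtration ℝ m0)
    (hFY : ∀ t, 0 ≤ t →
      (FY t : MeasurableSpace Ω)
        = ⨆ s ∈ Set.Icc (0 : ℝ) t, MeasurableSpace.comap (Y s) (borel ℝ))
    -- `π_t(X)`: a measurable version of `E[X_t | F^Y_t]`
    (πX : ℝ → Ω → ℝ)
    (hπXadapted : ∀ t, 0 ≤ t → StronglyMeasurable[FY t] (πX t))
    (hπX : ∀ t, 0 ≤ t → πX t =ᵐ[P] P[X t | FY t])
    -- `π_s(H)`: a progressively measurable version of `E[H_s | F^Y_s]`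
    (πH : ℝ → Ω → ℝ)
    (hπHprog : ProgMeasurable FY πH)
    (hπH : ∀ s, 0 ≤ s → πH s =ᵐ[P] P[H s | FY s])
    -- the process `N_t = π_t(X) − π_0(X) − ∫₀ᵗ π_s(H) ds`
    (N : ℝ → Ω → ℝ)
    (hN : ∀ t ω, N t ω = πX t ω - πX 0 ω - ∫ s in (0 : ℝ)..t, πH s ω) :
    -- `N` is a martingale with respect to `(F^Y_t)`
    (∀ t, 0 ≤ t → Integrable (N t) P) ∧
    (∀ t, 0 ≤ t → StronglyMeasurable[FY t] (N t)) ∧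
    (∀ s t, 0 ≤ s → s ≤ t → P[N t | FY s] =ᵐ[P] N s) := by
  classical
  obtain ⟨C₀, hC₀⟩ := hHbdd
  set C := max C₀ 0 with hCdef
  have hC : ∀ u ω, |H u ω| ≤ C := fun u ω => (hC₀ u ω).trans (le_max_left _ _)
  have hC0 : (0:ℝ) ≤ C := le_max_right _ _
  have hm : ∀ r : ℝ, FY r ≤ m0 := FY.le
  -- FY r ≤ F r
  have hFYle : ∀ r : ℝ, 0 ≤ r → FY r ≤ F r := by
    intro r hr
    rw [hFY r hr]
    refine iSup₂_le fun u hu => ?_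
    refine le_trans ?_ (F.mono hu.2)
    rintro A ⟨s, hs, rfl⟩
    exact (hYadapted u) hs
  -- clamped joint measurability
  have hHc : ∀ r : ℝ, StronglyMeasurable (fun p : ℝ × Ω => H (min p.1 r) p.2) := by
    intro r
    exact (@filt_clamp_sm Ω (F r) H r (hHprog r)).mono (filt_prod_mono (F.le r))
  have hπHcFY : ∀ r : ℝ,
      StronglyMeasurable[Real.measurableSpace.prod (FY r)]
        (fun p : ℝ × Ω => πH (min p.1 r) p.2) :=
    fun r => @filt_clamp_sm Ω (FY r) πH r (hπHprog r)
  have hπHc : ∀ r : ℝ, StronglyMeasurable (fun p : ℝ × Ω => πH (min p.1 r) p.2) :=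
    fun r => (hπHcFY r).mono (filt_prod_mono (hm r))
  -- integrability of H u
  have hHumeas : ∀ u : ℝ, Measurable (H u) := by
    intro u
    have hme : Measurable fun ω => H (min u u) ω :=
      (hHc u).measurable.comp (measurable_const.prodMk measurable_id)
    simpa [min_self] using hme
  have hHint : ∀ u : ℝ, Integrable (H u) P := by
    intro u
    exact Integrable.mono' (integrable_const C) (hHumeas u).aestronglyMeasurable
      (Filter.Eventually.of_forall fun ω => by simpa [Real.norm_eq_abs] using hC u ω)
  -- interval integrability of H sections
  have hHii : ∀ r : ℝ, 0 ≤ r → ∀ ω, IntervalIntegrable (fun u => H u ω) volume 0 r := by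
    intro r hr ω
    rw [intervalIntegrable_iff, Set.uIoc_of_le hr]
    have hme : Measurable fun u : ℝ => H (min u r) ω :=
      (hHc r).measurable.comp (measurable_id.prodMk measurable_const)
    have hsm : AEStronglyMeasurable (fun u => H u ω) (volume.restrict (Set.Ioc 0 r)) := by
      refine hme.aestronglyMeasurable.congr ?_
      filter_upwards [ae_restrict_mem measurableSet_Ioc] with u hu
      rw [min_eq_left hu.2]
    exact Integrable.mono' (integrableOn_const (C := C) measure_Ioc_lt_top.ne) hsm
      (Filter.Eventually.of_forall fun u => by simpa [Real.norm_eq_abs] using hC u ω)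
  -- a.e. bound for πH
  have hπHbd : ∀ u : ℝ, 0 ≤ u → ∀ᵐ ω ∂P, |πH u ω| ≤ C := by
    intro u hu
    have hb := ae_bdd_condExp_of_ae_bdd (μ := P) (m := FY u) (R := ⟨C, hC0⟩) (f := H u)
      (Filter.Eventually.of_forall fun ω => by exact hC u ω)
    filter_upwards [hπH u hu, hb] with ω h1 h2
    rw [h1]; exact h2
  -- product a.e. bound for πH
  have hπHprodbd : ∀ a b : ℝ, 0 ≤ a →
      ∀ᵐ p ∂(P.prod (volume.restrict (Set.Ioc a b))), |πH p.2 p.1| ≤ C := by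
    intro a b ha
    refine filt_ae_prod_bound (Gc := fun u ω => πH (min u b) ω) (hπHc b) ?_ ?_
    · intro u ω hu; simp [min_eq_left hu.2]
    · intro u hu; exact hπHbd u (ha.trans hu.1.le)
  -- a.e. section integrability of πH
  have hπHsec : ∀ r : ℝ, 0 ≤ r →
      ∀ᵐ ω ∂P, IntegrableOn (fun u => πH u ω) (Set.Ioc 0 r) volume := by
    intro r hr
    have h0 := Measure.ae_ae_of_ae_prod (hπHprodbd 0 r le_rfl)
    filter_upwards [h0] with ω hω
    have hme : Measurable fun u : ℝ => πH (min u r) ω :=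
      (hπHc r).measurable.comp (measurable_id.prodMk measurable_const)
    have hsm : AEStronglyMeasurable (fun u => πH u ω) (volume.restrict (Set.Ioc 0 r)) := by
      refine hme.aestronglyMeasurable.congr ?_
      filter_upwards [ae_restrict_mem measurableSet_Ioc] with u hu
      rw [min_eq_left hu.2]
    exact Integrable.mono' (integrableOn_const (C := C) measure_Ioc_lt_top.ne) hsm
      (hω.mono fun u hu => by simpa [Real.norm_eq_abs] using hu)
  -- measurability of the integrated process
  have hIsm : ∀ r : ℝ, 0 ≤ r →
      StronglyMeasurable[FY r] fun ω => ∫ u in (0:ℝ)..r, πH u ω := by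
    intro r hr
    have h1 : (fun ω => ∫ u in (0:ℝ)..r, πH u ω)
        = fun ω => ∫ u, πH (min u r) ω ∂(volume.restrict (Set.Ioc 0 r)) := by
      funext ω
      rw [intervalIntegral.integral_of_le hr]
      refine setIntegral_congr_fun measurableSet_Ioc fun u hu => ?_
      rw [min_eq_left hu.2]
    rw [h1]
    exact @StronglyMeasurable.integral_prod_left ℝ Ω ℝ Real.measurableSpace (FY r)
      (volume.restrict (Set.Ioc 0 r)) _ _ _ (fun u ω => πH (min u r) ω) (hπHcFY r)
  -- integrability of the integrated process
  have hIint : ∀ r : ℝ, 0 ≤ r →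
      Integrable (fun ω => ∫ u in (0:ℝ)..r, πH u ω) P := by
    intro r hr
    refine Integrable.mono' (integrable_const (C * r))
      (((hIsm r hr).mono (hm r)).aestronglyMeasurable) ?_
    filter_upwards [hπHsec r hr, Measure.ae_ae_of_ae_prod (hπHprodbd 0 r le_rfl)]
      with ω hInt hbd
    rw [intervalIntegral.integral_of_le hr, Real.norm_eq_abs]
    calc |∫ u in Set.Ioc 0 r, πH u ω| ≤ ∫ u in Set.Ioc 0 r, |πH u ω| := by
          simpa [Real.norm_eq_abs] using
            norm_integral_le_integral_norm (μ := volume.restrict (Set.Ioc 0 r))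
              (fun u => πH u ω)
      _ ≤ ∫ u in Set.Ioc 0 r, C := by
          refine integral_mono_ae hInt.abs (integrableOn_const measure_Ioc_lt_top.ne)
            (hbd.mono fun u hu => hu)
      _ ≤ C * r := by
          rw [setIntegral_const, Real.volume_real_Ioc]
          simp only [smul_eq_mul, sub_zero]
          rw [max_eq_left hr]
          nlinarith
  -- integrability of X
  have hXint : ∀ r : ℝ, 0 ≤ r → Integrable (X r) P := by
    intro r hr
    have hJmeas : Measurable fun ω => X r ω - X 0 ω - Z r ω :=
      ((hXmeas r).sub (hXmeas 0)).sub ((hZadapted r).mono (F.le r) le_rfl)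
    have hJeq : (fun ω => X r ω - X 0 ω - Z r ω)
        = fun ω => ∫ u in (0:ℝ)..r, H u ω := by
      funext ω; rw [hXdecomp r ω]; ring
    have hJint : Integrable (fun ω => ∫ u in (0:ℝ)..r, H u ω) P := by
      refine Integrable.mono' (integrable_const (C * |r|))
        ((hJeq ▸ hJmeas).aestronglyMeasurable) ?_
      refine Filter.Eventually.of_forall fun ω => ?_
      have := intervalIntegral.norm_integral_le_of_norm_le_const
        (f := fun u => H u ω) (a := (0:ℝ)) (b := r) (C := C)
        (fun u _ => by simpa [Real.norm_eq_abs] using hC u ω)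
      simpa using this
    have hXeq : X r = fun ω => X 0 ω + (∫ u in (0:ℝ)..r, H u ω) + Z r ω :=
      funext fun ω => hXdecomp r ω
    rw [hXeq]
    exact ((hX0L2.integrable one_le_two).add hJint).add (hZint r hr)
  -- integrability of πX
  have hπXint : ∀ r : ℝ, 0 ≤ r → Integrable (πX r) P :=
    fun r hr => integrable_condExp.congr (hπX r hr).symm
  -- conclusion 1 : integrability of N
  have goal1 : ∀ t, 0 ≤ t → Integrable (N t) P := by
    intro t ht
    have hNe : N t = fun ω => πX t ω - πX 0 ω - ∫ u in (0:ℝ)..t, πH u ω :=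
      funext fun ω => hN t ω
    rw [hNe]
    exact ((hπXint t ht).sub (hπXint 0 le_rfl)).sub (hIint t ht)
  -- conclusion 2 : adaptedness of N
  have goal2 : ∀ t, 0 ≤ t → StronglyMeasurable[FY t] (N t) := by
    intro t ht
    have hNe : N t = fun ω => πX t ω - πX 0 ω - ∫ u in (0:ℝ)..t, πH u ω :=
      funext fun ω => hN t ω
    rw [hNe]
    exact ((hπXadapted t ht).sub ((hπXadapted 0 le_rfl).mono (FY.mono ht))).sub (hIsm t ht)
  refine ⟨goal1, goal2, ?_⟩
  intro s t hs hst
  have ht : (0:ℝ) ≤ t := hs.trans hst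
  set Itf : Ω → ℝ := fun ω => ∫ u in (0:ℝ)..t, πH u ω with hItf
  set Isf : Ω → ℝ := fun ω => ∫ u in (0:ℝ)..s, πH u ω with hIsf
  have hIti : Integrable Itf P := hIint t ht
  have hIsi : Integrable Isf P := hIint s hs
  have hXti := hXint t ht
  have hXsi := hXint s hs
  haveI : IsFiniteMeasure (volume.restrict (Set.Ioc s t)) :=
    ⟨by rw [Measure.restrict_apply_univ]; exact measure_Ioc_lt_top⟩
  -- a.e. splitting of the πH integral
  have hsplitπ : ∀ᵐ ω ∂P, Itf ω - Isf ω = ∫ u in s..t, πH u ω := by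
    filter_upwards [hπHsec t ht] with ω hω
    have h1 : IntervalIntegrable (fun u => πH u ω) volume 0 t := by
      rw [intervalIntegrable_iff, Set.uIoc_of_le ht]; exact hω
    have h2 : IntervalIntegrable (fun u => πH u ω) volume 0 s := by
      rw [intervalIntegrable_iff, Set.uIoc_of_le hs]
      exact hω.mono_set (Set.Ioc_subset_Ioc le_rfl hst)
    exact intervalIntegral.integral_interval_sub_left h1 h2
  -- pointwise splitting of the H integral
  have hsplitH : ∀ ω, (∫ u in (0:ℝ)..t, H u ω) - (∫ u in (0:ℝ)..s, H u ω)
      = ∫ u in s..t, H u ω := by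
    intro ω
    refine intervalIntegral.integral_interval_sub_left (hHii t ht ω) ?_
    have h1 := hHii t ht ω
    rw [intervalIntegrable_iff, Set.uIoc_of_le ht] at h1
    rw [intervalIntegrable_iff, Set.uIoc_of_le hs]
    exact h1.mono_set (Set.Ioc_subset_Ioc le_rfl hst)
  have hXdiff : ∀ ω, X t ω - X s ω = (∫ u in s..t, H u ω) + (Z t ω - Z s ω) := by
    intro ω
    rw [hXdecomp t ω, hXdecomp s ω, ← hsplitH ω]; ring
  -- integrability of the middle H-integral
  have hJst : Integrable (fun ω => ∫ u in s..t, H u ω) P := by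
    have hmeq : (fun ω => ∫ u in s..t, H u ω)
        = fun ω => (X t ω - X s ω) - (Z t ω - Z s ω) := by
      funext ω; rw [hXdiff ω]; ring
    refine Integrable.mono' (integrable_const (C * |t - s|)) ?_ ?_
    · rw [hmeq]
      exact (((hXmeas t).sub (hXmeas s)).sub
        (((hZadapted t).mono (F.le t) le_rfl).sub
          ((hZadapted s).mono (F.le s) le_rfl))).aestronglyMeasurable
    · refine Filter.Eventually.of_forall fun ω => ?_
      simpa using intervalIntegral.norm_integral_le_of_norm_le_const
        (f := fun u => H u ω) (a := s) (b := t) (C := C)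
        (fun u _ => by simpa [Real.norm_eq_abs] using hC u ω)
  -- the key set-integral identity
  have hkey : ∀ A, MeasurableSet[FY s] A →
      ∫ ω in A, (X t ω - Itf ω) ∂P = ∫ ω in A, (X s ω - Isf ω) ∂P := by
    intro A hA
    have hAm : MeasurableSet A := hm s A hA
    -- Fubini for H
    have hfubH : Integrable (Function.uncurry fun (ω : Ω) (u : ℝ) => H u ω)
        ((P.restrict A).prod (volume.restrict (Set.Ioc s t))) := by
      have hmeas : Measurable fun p : Ω × ℝ => H (min p.2 t) p.1 :=
        (hHc t).measurable.comp measurable_swap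
      have hsm : AEStronglyMeasurable (Function.uncurry fun (ω : Ω) (u : ℝ) => H u ω)
          ((P.restrict A).prod (volume.restrict (Set.Ioc s t))) := by
        refine hmeas.aestronglyMeasurable.congr ?_
        filter_upwards [filt_ae_snd_mem (P.restrict A) measurableSet_Ioc] with p hp
        simp only [Function.uncurry]
        rw [min_eq_left hp.2]
      exact Integrable.mono' (integrable_const C) hsm
        (Filter.Eventually.of_forall fun p => by
          simpa [Function.uncurry, Real.norm_eq_abs] using hC p.2 p.1)
    have hswapH : ∫ ω in A, (∫ u in s..t, H u ω) ∂P
        = ∫ u in Set.Ioc s t, (∫ ω in A, H u ω ∂P) := by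
      have h1 : ∫ ω in A, (∫ u in s..t, H u ω) ∂P
          = ∫ ω in A, (∫ u in Set.Ioc s t, H u ω) ∂P := by
        refine integral_congr_ae (Filter.Eventually.of_forall fun ω => ?_)
        show (∫ u in s..t, H u ω) = ∫ u in Set.Ioc s t, H u ω
        rw [intervalIntegral.integral_of_le hst]
      rw [h1]
      exact integral_integral_swap hfubH
    -- Fubini for πH
    have hfubπ : Integrable (Function.uncurry fun (ω : Ω) (u : ℝ) => πH u ω)
        ((P.restrict A).prod (volume.restrict (Set.Ioc s t))) := by
      have hmeas : Measurable fun p : Ω × ℝ => πH (min p.2 t) p.1 :=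
        (hπHc t).measurable.comp measurable_swap
      have hsm : AEStronglyMeasurable (Function.uncurry fun (ω : Ω) (u : ℝ) => πH u ω)
          ((P.restrict A).prod (volume.restrict (Set.Ioc s t))) := by
        refine hmeas.aestronglyMeasurable.congr ?_
        filter_upwards [filt_ae_snd_mem (P.restrict A) measurableSet_Ioc] with p hp
        simp only [Function.uncurry]
        rw [min_eq_left hp.2]
      have hbd : ∀ᵐ p ∂((P.restrict A).prod (volume.restrict (Set.Ioc s t))),
          |πH p.2 p.1| ≤ C := by
        rw [Measure.restrict_prod_eq_prod_univ]
        exact ae_restrict_of_ae (hπHprodbd s t hs)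
      exact Integrable.mono' (integrable_const C) hsm
        (hbd.mono fun p hp => by
          simpa [Function.uncurry, Real.norm_eq_abs] using hp)
    have hswapπ : ∫ ω in A, (∫ u in s..t, πH u ω) ∂P
        = ∫ u in Set.Ioc s t, (∫ ω in A, πH u ω ∂P) := by
      have h1 : ∫ ω in A, (∫ u in s..t, πH u ω) ∂P
          = ∫ ω in A, (∫ u in Set.Ioc s t, πH u ω) ∂P := by
        refine integral_congr_ae (Filter.Eventually.of_forall fun ω => ?_)
        show (∫ u in s..t, πH u ω) = ∫ u in Set.Ioc s t, πH u ω
        rw [intervalIntegral.integral_of_le hst]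
      rw [h1]
      exact integral_integral_swap hfubπ
    -- martingale part vanishes
    have hZeq : ∫ ω in A, Z t ω ∂P = ∫ ω in A, Z s ω ∂P := by
      have hAFs : MeasurableSet[F s] A := hFYle s hs A hA
      rw [← setIntegral_condExp (F.le s) (hZint t ht) hAFs]
      exact setIntegral_congr_ae hAm ((hZmart s t hs hst).mono fun ω h _ => h)
    -- the conditional expectations of H and πH agree on A
    have hmid : ∫ u in Set.Ioc s t, (∫ ω in A, H u ω ∂P)
        = ∫ u in Set.Ioc s t, (∫ ω in A, πH u ω ∂P) := by
      refine integral_congr_ae ?_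
      filter_upwards [ae_restrict_mem measurableSet_Ioc] with u hu
      have hu0 : (0:ℝ) ≤ u := hs.trans hu.1.le
      have hAu : MeasurableSet[FY u] A := FY.mono hu.1.le A hA
      rw [← setIntegral_condExp (hm u) (hHint u) hAu]
      exact (setIntegral_congr_ae hAm ((hπH u hu0).mono fun ω h _ => h)).symm
    -- put the pieces together
    have hLHS : ∫ ω in A, (X t ω - Itf ω) ∂P
        = ∫ ω in A, X t ω ∂P - ∫ ω in A, Itf ω ∂P :=
      integral_sub hXti.integrableOn hIti.integrableOn
    have hRHS : ∫ ω in A, (X s ω - Isf ω) ∂P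
        = ∫ ω in A, X s ω ∂P - ∫ ω in A, Isf ω ∂P :=
      integral_sub hXsi.integrableOn hIsi.integrableOn
    have hXd : ∫ ω in A, X t ω ∂P - ∫ ω in A, X s ω ∂P
        = ∫ u in Set.Ioc s t, (∫ ω in A, H u ω ∂P) := by
      rw [← integral_sub hXti.integrableOn hXsi.integrableOn]
      have h2 : ∫ ω in A, (X t ω - X s ω) ∂P
          = ∫ ω in A, ((∫ u in s..t, H u ω) + (Z t ω - Z s ω)) ∂P :=
        integral_congr_ae (Filter.Eventually.of_forall fun ω => hXdiff ω)
      have hZts : Integrable (fun ω => Z t ω - Z s ω) P := (hZint t ht).sub (hZint s hs)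
      rw [h2, integral_add hJst.integrableOn hZts.integrableOn,
        integral_sub (hZint t ht).integrableOn (hZint s hs).integrableOn, hZeq,
        hswapH]
      ring
    have hId : ∫ ω in A, Itf ω ∂P - ∫ ω in A, Isf ω ∂P
        = ∫ u in Set.Ioc s t, (∫ ω in A, πH u ω ∂P) := by
      rw [← integral_sub hIti.integrableOn hIsi.integrableOn,
        integral_congr_ae (ae_restrict_of_ae hsplitπ), hswapπ]
    rw [hLHS, hRHS]
    linarith [hXd, hId, hmid]
  -- conditional expectation computation
  have hk1 : P[(fun ω => X t ω - Itf ω)|FY s] =ᵐ[P] P[(fun ω => X s ω - Isf ω)|FY s] :=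
    filt_condexp_eq_of_setIntegral_eq (hm s) (hXti.sub hIti) (hXsi.sub hIsi) hkey
  have hk2 : P[(fun ω => X t ω - Itf ω)|FY s] =ᵐ[P] P[X t|FY s] - P[Itf|FY s] := by
    have he : (fun ω => X t ω - Itf ω) = X t - Itf := rfl
    rw [he]; exact condExp_sub hXti hIti _
  have hk3 : P[(fun ω => X s ω - Isf ω)|FY s] =ᵐ[P] P[X s|FY s] - P[Isf|FY s] := by
    have he : (fun ω => X s ω - Isf ω) = X s - Isf := rfl
    rw [he]; exact condExp_sub hXsi hIsi _
  have hk4 : P[Isf|FY s] = Isf :=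
    condExp_of_stronglyMeasurable (hm s) (hIsm s hs) hIsi
  have he3 : P[πX 0|FY s] = πX 0 :=
    condExp_of_stronglyMeasurable (hm s)
      ((hπXadapted 0 le_rfl).mono (FY.mono hs)) (hπXint 0 le_rfl)
  have he2 : P[πX t|FY s] =ᵐ[P] P[X t|FY s] :=
    (condExp_congr_ae (hπX t ht)).trans (condExp_condExp_of_le (FY.mono hst) (FY.le t))
  have he1 : P[N t|FY s] =ᵐ[P] P[πX t|FY s] - P[πX 0|FY s] - P[Itf|FY s] := by
    have hNe : N t = πX t - πX 0 - Itf := by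
      funext ω; simp only [Pi.sub_apply]; exact hN t ω
    rw [hNe]
    exact (condExp_sub ((hπXint t ht).sub (hπXint 0 le_rfl)) hIti _).trans
      (Filter.EventuallyEq.sub
        (condExp_sub (hπXint t ht) (hπXint 0 le_rfl) _) (Filter.EventuallyEq.refl _ _))
  filter_upwards [he1, he2, hk1, hk2, hk3, hπX s hs] with ω h1 h2 h3 h4 h5 h6
  simp only [Pi.sub_apply] at h1 h2 h3 h4 h5
  have e3 := congrFun he3 ω
  have e4 := congrFun hk4 ω
  have hNs : N s ω = πX s ω - πX 0 ω - Isf ω := hN s ω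
  rw [hNs]
  linarith [h1, h2, h3, h4, h5, h6, e3, e4]
end
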